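/- arXiv:1902.04071 — 2 statements merged into one kernel-verified Lean document; each statement's English description precedes it below -/
import Mathlib

section
/- The algebra μ₃' with basis {e₁,…,e_{n-2k-1}, f₁,…,f_{2k}} and non-zero products [eᵢ,e₁] = e_{i+1} for 2 ≤ i ≤ n-2k-1 and [e₂,f_j] = f_{k+j} for 1 ≤ j ≤ k, is a nilpotent Leibniz algebra. -/
/-! Only `e₁`, `e₂` and `f₁, …, f_k` act nontrivially on the right of a bracket, and a bracket has
no components along them. Hence `[x, [y, z]] = 0`, while `[[x, y], z] = Σ xᵢ y₁ z₁ e_{i+2}` is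
symmetric in `y, z`, so both sides of the Leibniz identity vanish. In a left-normed product every
further factor pushes the `e`-components one index higher, and the `f`-components vanish from the
second bracket on, so left-normed products of length `n + 1` are zero. -/

noncomputable section

open Finset

/-- Underlying space of `μ₃'`: basis `e₁,…,e_{n-2k-1}` (left) and `f₁,…,f_{2k}` (right). -/
abbrev Lmu3 (n k : ℕ) := (Fin (n - 2 * k - 1) ⊕ Fin (2 * k)) → ℂ

/-- `1`-indexed basis vector `eᵢ` (zero when `i` is out of range). -/
def Eb (n k : ℕ) (i : ℕ) : Lmu3 n k := fun s =>
  match s with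
  | .inl a => if (a : ℕ) + 1 = i then 1 else 0
  | .inr _ => 0

/-- `1`-indexed basis vector `fⱼ` (zero when `j` is out of range). -/
def Fb (n k : ℕ) (j : ℕ) : Lmu3 n k := fun s =>
  match s with
  | .inl _ => 0
  | .inr a => if (a : ℕ) + 1 = j then 1 else 0

/-- Structure constants of `μ₃'`: `[eᵢ,e₁] = e_{i+1}` (2 ≤ i ≤ n-2k-1),
`[e₂,fⱼ] = f_{k+j}` (1 ≤ j ≤ k), all other products of basis vectors vanish. -/
def cμ3 (n k : ℕ) :
    (Fin (n - 2 * k - 1) ⊕ Fin (2 * k)) → (Fin (n - 2 * k - 1) ⊕ Fin (2 * k)) → Lmu3 n k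
  | .inl a, .inl b => if (b : ℕ) = 0 ∧ 1 ≤ (a : ℕ) then Eb n k ((a : ℕ) + 2) else 0
  | .inl a, .inr b => if (a : ℕ) = 1 ∧ (b : ℕ) < k then Fb n k ((b : ℕ) + 1 + k) else 0
  | _, _ => 0

/-- Bracket of `μ₃'`. -/
def brkμ3 (n k : ℕ) (x y : Lmu3 n k) : Lmu3 n k :=
  ∑ i : Fin (n - 2 * k - 1) ⊕ Fin (2 * k), ∑ j : Fin (n - 2 * k - 1) ⊕ Fin (2 * k),
    (x i * y j) • cμ3 n k i j

/-- Left-normed iterated bracket in `μ₃'`. -/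
def iterμ3 (n k : ℕ) : ℕ → (ℕ → Lmu3 n k) → Lmu3 n k
  | 0, x => x 0
  | m + 1, x => brkμ3 n k (iterμ3 n k m x) (x (m + 1))

namespace Mu3

variable {n k : ℕ}

-- Coordinates are 0-indexed: `.inl c` is the coefficient of `e_{c+1}`, `.inr b` that of `f_{b+1}`.
lemma brkμ3_apply_inl (x y : Lmu3 n k) (c : Fin (n - 2 * k - 1)) :
    brkμ3 n k x y (.inl c)
      = if h : 2 ≤ (c : ℕ) then x (.inl ⟨c - 1, by omega⟩) * y (.inl ⟨0, by omega⟩) else 0 := by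
  simp only [brkμ3, Finset.sum_apply, Pi.smul_apply, smul_eq_mul]
  split_ifs with h
  · rw [Fintype.sum_eq_single (.inl ⟨c - 1, by omega⟩), Fintype.sum_eq_single (.inl ⟨0, by omega⟩)]
    · simp only [cμ3, Eb, ite_apply]
      rw [if_pos ⟨trivial, by omega⟩, if_pos (by omega), mul_one]
    · rintro (b | b) hb <;> simp_all [cμ3, Fb, ite_apply, Fin.ext_iff]
    · rintro (a | a) ha <;> refine Finset.sum_eq_zero fun b _ => ?_ <;> rcases b with b | b <;>
        simp_all [cμ3, Eb, Fb, ite_apply, Fin.ext_iff]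
      omega
  · refine Finset.sum_eq_zero fun a _ => Finset.sum_eq_zero fun b _ => ?_
    rcases a with a | a <;> rcases b with b | b <;> simp_all [cμ3, Eb, Fb, ite_apply]
    omega

lemma brkμ3_apply_inr (hN : 1 < n - 2 * k - 1) (x y : Lmu3 n k) (b : Fin (2 * k)) :
    brkμ3 n k x y (.inr b)
      = if h : k ≤ (b : ℕ) then x (.inl ⟨1, hN⟩) * y (.inr ⟨b - k, by omega⟩) else 0 := by
  simp only [brkμ3, Finset.sum_apply, Pi.smul_apply, smul_eq_mul]
  split_ifs with h
  · rw [Fintype.sum_eq_single (.inl ⟨1, hN⟩), Fintype.sum_eq_single (.inr ⟨b - k, by omega⟩)]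
    · simp only [cμ3, Fb, ite_apply]
      rw [if_pos ⟨trivial, by omega⟩, if_pos (by omega), mul_one]
    · rintro (c | c) hc <;> simp_all [cμ3, Eb, Fb, ite_apply, Fin.ext_iff]
      omega
    · rintro (a | a) ha <;> refine Finset.sum_eq_zero fun c _ => ?_ <;> rcases c with c | c <;>
        simp_all [cμ3, Eb, ite_apply, Fin.ext_iff]
  · refine Finset.sum_eq_zero fun a _ => Finset.sum_eq_zero fun c _ => ?_
    rcases a with a | a <;> rcases c with c | c <;> simp_all [cμ3, Eb, Fb, ite_apply]
    omega

lemma brkμ3_brkμ3_right (hN : 1 < n - 2 * k - 1) (x y z : Lmu3 n k) :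
    brkμ3 n k x (brkμ3 n k y z) = 0 := by
  funext s
  rcases s with c | b
  · simp [brkμ3_apply_inl]
  · have := b.isLt
    simp only [brkμ3_apply_inr hN]
    split_ifs <;> simp_all
    omega

lemma brkμ3_brkμ3_comm (hN : 1 < n - 2 * k - 1) (x y z : Lmu3 n k) :
    brkμ3 n k (brkμ3 n k x y) z = brkμ3 n k (brkμ3 n k x z) y := by
  funext s
  rcases s with c | b
  · simp only [brkμ3_apply_inl]
    split_ifs <;> ring
  · simp only [brkμ3_apply_inr hN, brkμ3_apply_inl]
    simp

lemma iterμ3_apply_inl_eq_zero {m : ℕ} (hm : 1 ≤ m) (x : ℕ → Lmu3 n k)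
    (c : Fin (n - 2 * k - 1)) (hc : (c : ℕ) ≤ m) : iterμ3 n k m x (.inl c) = 0 := by
  induction m, hm using Nat.le_induction generalizing c with
  | base => simp [iterμ3, brkμ3_apply_inl, show ¬2 ≤ (c : ℕ) by omega]
  | succ m hm ih =>
    rw [iterμ3, brkμ3_apply_inl]
    split_ifs
    · rw [ih _ (by simp; omega), zero_mul]
    · rfl

lemma iterμ3_apply_inr_eq_zero (hN : 1 < n - 2 * k - 1) {m : ℕ} (hm : 2 ≤ m)
    (x : ℕ → Lmu3 n k) (b : Fin (2 * k)) : iterμ3 n k m x (.inr b) = 0 := by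
  obtain ⟨m, rfl⟩ := Nat.exists_eq_add_of_le' hm
  rw [iterμ3, brkμ3_apply_inr hN]
  split_ifs
  · rw [iterμ3_apply_inl_eq_zero (by omega) _ _ (by simp), zero_mul]
  · rfl

end Mu3

open Mu3 in
theorem mu3prime_nilpotent_Leibniz_general (n k : ℕ) (hn : 2 * k + 4 ≤ n) :
    (∀ x y z : Lmu3 n k,
      brkμ3 n k x (brkμ3 n k y z)
        = brkμ3 n k (brkμ3 n k x y) z - brkμ3 n k (brkμ3 n k x z) y) ∧
    (∃ m : ℕ, ∀ x : ℕ → Lmu3 n k, iterμ3 n k m x = 0) := by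
  have hN : 1 < n - 2 * k - 1 := by omega
  refine ⟨fun x y z => ?_, n, fun x => ?_⟩
  · rw [brkμ3_brkμ3_right hN, brkμ3_brkμ3_comm hN x y z, sub_self]
  · funext s
    rcases s with c | b
    · exact iterμ3_apply_inl_eq_zero (by omega) x c (by omega)
    · exact iterμ3_apply_inr_eq_zero hN (by omega) x b

/-- `μ₃'` is a nilpotent Leibniz algebra: it satisfies the Leibniz identity and
its lower central series vanishes (equivalently all sufficiently long left-normed
products vanish). -/
theorem mu3prime_nilpotent_Leibniz (n k : ℕ) (hk : 1 ≤ k) (hn : 2 * k + 4 ≤ n) :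
    (∀ x y z : Lmu3 n k,
      brkμ3 n k x (brkμ3 n k y z)
        = brkμ3 n k (brkμ3 n k x y) z - brkμ3 n k (brkμ3 n k x z) y) ∧
    (∃ m : ℕ, ∀ x : ℕ → Lmu3 n k, iterμ3 n k m x = 0) :=
  mu3prime_nilpotent_Leibniz_general n k hn

end
end

section
/- Consider a block matrix D = [[A₁+A₂, B],[C, K₁+K₂]] where A₁, K₁ are diagonal, A₂, K₂ are strictly upper triangular (hence nilpotent), CB = 0, C(A₁+A₂) and (K₁+K₂)C have the same support pattern as C, (A₁+A₂)B and B(K₁+K₂) have the same support pattern as B, and BC is nilpotent together with A₁A₂, A₂², K₁K₂, K₂². Then D is nilpotent if and only if A₁ = 0 and K₁ = 0. -/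
open Matrix

/-- `M` has the support pattern of `B` (nonzero entries only in the first two rows). -/
def BType {r s : ℕ} (M : Matrix (Fin r) (Fin s) ℂ) : Prop :=
  ∀ (i : Fin r) (j : Fin s), 2 ≤ (i : ℕ) → M i j = 0

/-- `M` has the support pattern of `C` (nonzero entries only in the last column). -/
def CType {r s : ℕ} (M : Matrix (Fin s) (Fin r) ℂ) : Prop :=
  ∀ (i : Fin s) (j : Fin r), (j : ℕ) + 1 ≠ r → M i j = 0

private lemma tri_pow {N : ℕ} (M : Matrix (Fin N) (Fin N) ℂ)
    (hM : ∀ i j : Fin N, (j : ℕ) < (i : ℕ) → M i j = 0) (t : ℕ) :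
    (∀ i j : Fin N, (j : ℕ) < (i : ℕ) → (M ^ t) i j = 0) ∧
      (∀ i : Fin N, (M ^ t) i i = (M i i) ^ t) := by
  induction t with
  | zero =>
    constructor
    · intro i j h
      rw [pow_zero]
      exact Matrix.one_apply_ne (fun e => by rw [e] at h; omega)
    · intro i; simp
  | succ t ih =>
    obtain ⟨ih1, ih2⟩ := ih
    constructor
    · intro i j h
      rw [pow_succ, Matrix.mul_apply]
      apply Finset.sum_eq_zero
      intro k _
      rcases lt_or_ge (k : ℕ) (i : ℕ) with hk | hk
      · rw [ih1 i k hk, zero_mul]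
      · rw [hM k j (by omega), mul_zero]
    · intro i
      rw [pow_succ, Matrix.mul_apply, Finset.sum_eq_single i]
      · rw [ih2 i, pow_succ]
      · intro k _ hk
        have hne : (k : ℕ) ≠ (i : ℕ) := fun e => hk (Fin.ext e)
        rcases lt_or_ge (k : ℕ) (i : ℕ) with h | h
        · rw [ih1 i k h, zero_mul]
        · rw [hM k i (by omega), mul_zero]
      · intro h; exact absurd (Finset.mem_univ _) h

private lemma strict_pow {N : ℕ} (M : Matrix (Fin N) (Fin N) ℂ)
    (hM : ∀ i j : Fin N, (j : ℕ) ≤ (i : ℕ) → M i j = 0) : M ^ N = 0 := by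
  have key : ∀ t, ∀ i j : Fin N, (j : ℕ) < (i : ℕ) + t → (M ^ t) i j = 0 := by
    intro t
    induction t with
    | zero =>
      intro i j h
      rw [pow_zero]
      exact Matrix.one_apply_ne (fun e => by rw [e] at h; omega)
    | succ t ih =>
      intro i j h
      rw [pow_succ, Matrix.mul_apply]
      apply Finset.sum_eq_zero
      intro k _
      rcases le_or_gt (j : ℕ) (k : ℕ) with hk | hk
      · rw [hM k j hk, mul_zero]
      · rw [ih i k (by omega), zero_mul]
  ext i j
  have := j.isLt
  simpa using key N i j (by omega)

private lemma trace_fromBlocks' {r s : ℕ} (X : Matrix (Fin r) (Fin r) ℂ)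
    (B : Matrix (Fin r) (Fin s) ℂ) (C : Matrix (Fin s) (Fin r) ℂ)
    (W : Matrix (Fin s) (Fin s) ℂ) :
    (Matrix.fromBlocks X B C W).trace = X.trace + W.trace := by
  simp [Matrix.trace, Fintype.sum_sum_type, Matrix.diag, Matrix.fromBlocks]

private lemma powerSums_zero {n : Type*} [Fintype n] (f : n → ℂ)
    (h : ∀ t : ℕ, 1 ≤ t → ∑ i, f i ^ t = 0) (i : n) : f i = 0 := by
  classical
  have hps : ∀ m : ℕ, MvPolynomial.aeval f (MvPolynomial.psum n ℂ m) = ∑ j, f j ^ m := by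
    intro m; simp [MvPolynomial.psum]
  have hes : ∀ k : ℕ, 1 ≤ k → (Finset.univ.val.map f).esymm k = 0 := by
    intro k hk
    have h0 := congrArg (MvPolynomial.aeval f) (MvPolynomial.mul_esymm_eq_sum n ℂ k)
    rw [_root_.map_mul, _root_.map_mul, map_sum] at h0
    have hsum : ∀ a ∈ (Finset.HasAntidiagonal.antidiagonal k).filter (fun a => a.1 < k),
        MvPolynomial.aeval f ((-1) ^ a.1 * MvPolynomial.esymm n ℂ a.1 * MvPolynomial.psum n ℂ a.2)
          = 0 := by
      intro a ha
      simp only [Finset.mem_filter, Finset.HasAntidiagonal.mem_antidiagonal] at ha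
      rw [_root_.map_mul, hps, h a.2 (by omega), mul_zero]
    rw [Finset.sum_eq_zero hsum, mul_zero] at h0
    have hk' : (MvPolynomial.aeval f) ((k : MvPolynomial n ℂ)) = (k : ℂ) := by
      simp
    rw [hk'] at h0
    rcases mul_eq_zero.mp h0 with h' | h'
    · exact absurd h' (Nat.cast_ne_zero.mpr (by omega))
    · rw [MvPolynomial.aeval_esymm_eq_multiset_esymm] at h'
      exact h'
  have hprod : ((Finset.univ.val.map f).map (fun t => Polynomial.X + Polynomial.C t)).prod
      = Polynomial.X ^ Fintype.card n := by
    rw [Multiset.prod_X_add_C_eq_sum_esymm]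
    have hcard : Multiset.card (Finset.univ.val.map f) = Fintype.card n := by simp
    rw [hcard, Finset.sum_eq_single 0]
    · simp [Multiset.esymm, Multiset.powersetCard_zero_left]
    · intro b _ hb
      rw [hes b (by omega), map_zero, zero_mul]
    · intro habs
      exact absurd (Finset.mem_range.mpr (by omega)) habs
  have heval := congrArg (Polynomial.eval (-(f i))) hprod
  rw [Polynomial.eval_pow, Polynomial.eval_X, Polynomial.eval_multiset_prod] at heval
  have hmem : (0 : ℂ) ∈ ((Finset.univ.val.map f).map
      (fun t => Polynomial.X + Polynomial.C t)).map (Polynomial.eval (-(f i))) := by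
    rw [Multiset.map_map]
    refine Multiset.mem_map.mpr ⟨f i, ?_, by simp⟩
    exact Multiset.mem_map.mpr ⟨i, by simp, rfl⟩
  rw [Multiset.prod_eq_zero hmem] at heval
  have : Nonempty n := ⟨i⟩
  have := (pow_eq_zero_iff (Fintype.card_ne_zero)).mp heval.symm
  simpa using this

/-- For a block matrix `D = [[A₁+A₂, B],[C, K₁+K₂]]` with `A₁, K₁` diagonal,
`A₂, K₂` strictly upper triangular, `CB = 0`, the products `C(A₁+A₂)`,
`(K₁+K₂)C` of type `C`, the products `(A₁+A₂)B`, `B(K₁+K₂)` of type `B`, and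
`BC`, `A₁A₂`, `A₂²`, `K₁K₂`, `K₂²` nilpotent, the matrix `D` is nilpotent if and
only if `A₁ = 0` and `K₁ = 0`. -/
theorem block_matrix_nilpotency (r s : ℕ)
    (A₁ A₂ : Matrix (Fin r) (Fin r) ℂ)
    (K₁ K₂ : Matrix (Fin s) (Fin s) ℂ)
    (B : Matrix (Fin r) (Fin s) ℂ)
    (C : Matrix (Fin s) (Fin r) ℂ)
    (hA₁ : A₁.IsDiag) (hK₁ : K₁.IsDiag)
    (hA₂ : ∀ i j : Fin r, (j : ℕ) ≤ (i : ℕ) → A₂ i j = 0)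
    (hK₂ : ∀ i j : Fin s, (j : ℕ) ≤ (i : ℕ) → K₂ i j = 0)
    (hB : BType B) (hC : CType C)
    (hCB : C * B = 0)
    (hCA : CType (C * (A₁ + A₂))) (hKC : CType ((K₁ + K₂) * C))
    (hAB : BType ((A₁ + A₂) * B)) (hBK : BType (B * (K₁ + K₂)))
    (hBC : IsNilpotent (B * C))
    (hA₁A₂ : IsNilpotent (A₁ * A₂)) (hA₂sq : IsNilpotent (A₂ * A₂))
    (hK₁K₂ : IsNilpotent (K₁ * K₂)) (hK₂sq : IsNilpotent (K₂ * K₂)) :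
    IsNilpotent (Matrix.fromBlocks (A₁ + A₂) B C (K₁ + K₂)) ↔ A₁ = 0 ∧ K₁ = 0 := by
  set A : Matrix (Fin r) (Fin r) ℂ := A₁ + A₂ with hA
  set K : Matrix (Fin s) (Fin s) ℂ := K₁ + K₂ with hK
  set D : Matrix (Fin r ⊕ Fin s) (Fin r ⊕ Fin s) ℂ := Matrix.fromBlocks A B C K with hD
  have hAtri : ∀ i j : Fin r, (j : ℕ) < (i : ℕ) → A i j = 0 := by
    intro i j h
    have h1 : A₁ i j = 0 := hA₁ (fun e => by rw [e] at h; omega)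
    have h2 : A₂ i j = 0 := hA₂ i j (by omega)
    simp [hA, Matrix.add_apply, h1, h2]
  have hKtri : ∀ i j : Fin s, (j : ℕ) < (i : ℕ) → K i j = 0 := by
    intro i j h
    have h1 : K₁ i j = 0 := hK₁ (fun e => by rw [e] at h; omega)
    have h2 : K₂ i j = 0 := hK₂ i j (by omega)
    simp [hK, Matrix.add_apply, h1, h2]
  -- key: C * (A^a * B) = 0
  have hCAB : ∀ a : ℕ, C * (A ^ a * B) = 0 := by
    rcases Nat.eq_zero_or_pos r with hr | hr
    · intro a
      ext i j
      rw [Matrix.mul_apply]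
      apply Finset.sum_eq_zero
      intro k _
      exact absurd k.isLt (by omega)
    · have hCA2 : C * A = (A ⟨r - 1, by omega⟩ ⟨r - 1, by omega⟩) • C := by
        ext i j
        rcases eq_or_ne ((j : ℕ) + 1) r with hj | hj
        · rw [Matrix.mul_apply, Finset.sum_eq_single (⟨r - 1, by omega⟩ : Fin r)]
          · have hje : (⟨r - 1, by omega⟩ : Fin r) = j := Fin.ext (by simp; omega)
            rw [Matrix.smul_apply, smul_eq_mul, hje]
            ring
          · intro k _ hk
            rw [hC i k (fun e => hk (Fin.ext (by simp; omega))), zero_mul]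
          · intro hcon; exact absurd (Finset.mem_univ _) hcon
        · rw [Matrix.smul_apply, hC i j hj, smul_zero, Matrix.mul_apply]
          apply Finset.sum_eq_zero
          intro k _
          rcases eq_or_ne ((k : ℕ) + 1) r with hk | hk
          · rw [hAtri k j (by omega), mul_zero]
          · rw [hC i k hk, zero_mul]
      intro a
      induction a with
      | zero => rw [pow_zero, Matrix.one_mul]; exact hCB
      | succ a ih =>
        rw [pow_succ', Matrix.mul_assoc, ← Matrix.mul_assoc C A, hCA2, Matrix.smul_mul, ih,
          smul_zero]
  have L1 : ∀ m b : ℕ, (A ^ m * (B * (K ^ b * C))).trace = 0 := by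
    intro m b
    rw [← Matrix.mul_assoc, Matrix.trace_mul_comm, Matrix.mul_assoc, hCAB m, Matrix.mul_zero,
      Matrix.trace_zero]
  -- main structural induction
  have main : ∀ t : ℕ, 1 ≤ t → ∃ P Q R₀,
      D ^ t = Matrix.fromBlocks (A ^ t + P) Q R₀ (K ^ t) ∧
      (∀ m, (A ^ m * P).trace = 0) ∧
      (∀ a, P * (A ^ a * B) = 0) ∧
      (∀ m b, (A ^ m * (Q * (K ^ b * C))).trace = 0) ∧
      (∀ a, R₀ * (A ^ a * B) = 0) := by
    intro t ht
    induction t, ht using Nat.le_induction with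
    | base =>
      exact ⟨0, B, C, by simp [hD], by simp, by simp, L1, hCAB⟩
    | succ t ht ih =>
      obtain ⟨P, Q, R₀, hEq, i2, i3, i4, i5⟩ := ih
      have hPB : P * B = 0 := by simpa using i3 0
      have hRB : R₀ * B = 0 := by simpa using i5 0
      refine ⟨P * A + Q * C, (A ^ t + P) * B + Q * K, R₀ * A + K ^ t * C, ?_, ?_, ?_, ?_, ?_⟩
      · have hb11 : (A ^ t + P) * A + Q * C = A ^ (t + 1) + (P * A + Q * C) := by
          rw [Matrix.add_mul, pow_succ, add_assoc]
        have hb22 : R₀ * B + K ^ t * K = K ^ (t + 1) := by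
          rw [hRB, zero_add, pow_succ]
        rw [pow_succ, hEq, hD, Matrix.fromBlocks_multiply, hb11, hb22]
      · intro m
        rw [Matrix.mul_add, Matrix.trace_add]
        have e1 : (A ^ m * (P * A)).trace = 0 := by
          rw [← Matrix.mul_assoc, Matrix.trace_mul_comm, ← Matrix.mul_assoc, ← pow_succ']
          exact i2 (m + 1)
        have e2 : (A ^ m * (Q * C)).trace = 0 := by
          have := i4 m 0
          rwa [pow_zero, Matrix.one_mul] at this
        rw [e1, e2, add_zero]
      · intro a
        rw [Matrix.add_mul, Matrix.mul_assoc P A, ← Matrix.mul_assoc A, ← pow_succ',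
          Matrix.mul_assoc Q C, hCAB a, Matrix.mul_zero, i3 (a + 1), add_zero]
      · intro m b
        have e1 : ((A ^ t + P) * B + Q * K) * (K ^ b * C)
            = A ^ t * (B * (K ^ b * C)) + Q * (K ^ (b + 1) * C) := by
          rw [Matrix.add_mul, Matrix.add_mul, hPB, add_zero, Matrix.mul_assoc,
            Matrix.mul_assoc Q K, ← Matrix.mul_assoc K, ← pow_succ']
        rw [e1, Matrix.mul_add, Matrix.trace_add, ← Matrix.mul_assoc (A ^ m) (A ^ t),
          ← pow_add, L1 (m + t) b, i4 m (b + 1), add_zero]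
      · intro a
        rw [Matrix.add_mul, Matrix.mul_assoc R₀ A, ← Matrix.mul_assoc A, ← pow_succ',
          Matrix.mul_assoc (K ^ t) C, hCAB a, Matrix.mul_zero, i5 (a + 1), add_zero]
  constructor
  · -- nilpotent → A₁ = 0 ∧ K₁ = 0
    intro hNil
    have htr : ∀ t : ℕ, 1 ≤ t →
        (∑ i : Fin r, A₁ i i ^ t) + (∑ j : Fin s, K₁ j j ^ t) = 0 := by
      intro t ht
      obtain ⟨P, Q, R₀, hEq, i2, _, _, _⟩ := main t ht
      have hDt : IsNilpotent (D ^ t) := by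
        obtain ⟨n, hn⟩ := hNil
        exact ⟨n, by rw [← pow_mul, Nat.mul_comm, pow_mul, hn, zero_pow (by omega)]⟩
      have h1 : (D ^ t).trace = 0 :=
        (Matrix.isNilpotent_trace_of_isNilpotent hDt).eq_zero
      have hP : P.trace = 0 := by
        have := i2 0
        rwa [pow_zero, Matrix.one_mul] at this
      have hAt : (A ^ t).trace = ∑ i : Fin r, A₁ i i ^ t := by
        rw [Matrix.trace]
        apply Finset.sum_congr rfl
        intro i _
        rw [Matrix.diag_apply, (tri_pow A hAtri t).2 i]
        congr 1
        simp [hA, Matrix.add_apply, hA₂ i i le_rfl]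
      have hKt : (K ^ t).trace = ∑ j : Fin s, K₁ j j ^ t := by
        rw [Matrix.trace]
        apply Finset.sum_congr rfl
        intro i _
        rw [Matrix.diag_apply, (tri_pow K hKtri t).2 i]
        congr 1
        simp [hK, Matrix.add_apply, hK₂ i i le_rfl]
      rw [hEq, trace_fromBlocks', Matrix.trace_add, hP, add_zero, hAt, hKt] at h1
      exact h1
    have hall := powerSums_zero (Sum.elim (fun i : Fin r => A₁ i i) (fun j : Fin s => K₁ j j))
      (by
        intro t ht
        rw [Fintype.sum_sum_type]
        simp only [Sum.elim_inl, Sum.elim_inr]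
        exact htr t ht)
    constructor
    · ext i j
      rcases eq_or_ne i j with rfl | hne
      · simpa using hall (Sum.inl i)
      · simp [hA₁ hne]
    · ext i j
      rcases eq_or_ne i j with rfl | hne
      · simpa using hall (Sum.inr i)
      · simp [hK₁ hne]
  · -- A₁ = 0 ∧ K₁ = 0 → nilpotent
    rintro ⟨h1, h2⟩
    have hAs : ∀ i j : Fin r, (j : ℕ) ≤ (i : ℕ) → A i j = 0 := by
      intro i j h
      simp [hA, h1, Matrix.add_apply, hA₂ i j h]
    have hKs : ∀ i j : Fin s, (j : ℕ) ≤ (i : ℕ) → K i j = 0 := by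
      intro i j h
      simp [hK, h2, Matrix.add_apply, hK₂ i j h]
    have hAr : A ^ r = 0 := strict_pow A hAs
    have hKsp : K ^ s = 0 := strict_pow K hKs
    have hCA0 : C * A = 0 := by
      ext i j
      rw [Matrix.mul_apply]
      apply Finset.sum_eq_zero
      intro k _
      rcases eq_or_ne ((k : ℕ) + 1) r with hk | hk
      · rw [hAs k j (by have := j.isLt; omega), mul_zero]
      · rw [hC i k hk, zero_mul]
    have hCApow : ∀ m : ℕ, 1 ≤ m → C * A ^ m = 0 := by
      intro m hm
      obtain ⟨m, rfl⟩ := Nat.exists_eq_add_of_le hm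
      rw [add_comm, pow_succ', ← Matrix.mul_assoc, hCA0, Matrix.zero_mul]
    have main2 : ∀ t : ℕ, 1 ≤ t → ∃ P Q R₀,
        D ^ t = Matrix.fromBlocks (A ^ t + P) Q R₀ (K ^ t) ∧
        (∀ a, P * (A ^ a * B) = 0) ∧
        (∀ a, R₀ * (A ^ a * B) = 0) ∧
        (∀ m b, r + s ≤ m + b + t → A ^ m * (Q * K ^ b) = 0) ∧
        (∀ m₁ m₂, 2 * r + s ≤ m₁ + m₂ + t → A ^ m₁ * (P * A ^ m₂) = 0) ∧
        (∀ b m, r + s ≤ b + m + t → K ^ b * (R₀ * A ^ m) = 0) := by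
      intro t ht
      induction t, ht using Nat.le_induction with
      | base =>
        refine ⟨0, B, C, by simp [hD], by simp, hCAB, ?_, by simp, ?_⟩
        · intro m b hmb
          rcases le_or_gt r m with hm | hm
          · rw [pow_eq_zero_of_le hm hAr, Matrix.zero_mul]
          · rw [pow_eq_zero_of_le (by omega : s ≤ b) hKsp, Matrix.mul_zero, Matrix.mul_zero]
        · intro b m hbm
          rcases Nat.eq_zero_or_pos m with rfl | hm
          · rcases Nat.eq_zero_or_pos r with hr | hr
            · have hC0 : C = 0 := by
                ext i j; exact absurd j.isLt (by omega)
              rw [hC0, Matrix.zero_mul, Matrix.mul_zero]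
            · rw [pow_eq_zero_of_le (by omega : s ≤ b) hKsp, Matrix.zero_mul]
          · rw [hCApow m hm, Matrix.mul_zero]
      | succ t ht ih =>
        obtain ⟨P, Q, R₀, hEq, i3, i5, iQ, iP, iR⟩ := ih
        have hPB : P * B = 0 := by simpa using i3 0
        have hRB : R₀ * B = 0 := by simpa using i5 0
        refine ⟨P * A + Q * C, (A ^ t + P) * B + Q * K, R₀ * A + K ^ t * C, ?_, ?_, ?_, ?_, ?_, ?_⟩
        · have hb11 : (A ^ t + P) * A + Q * C = A ^ (t + 1) + (P * A + Q * C) := by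
            rw [Matrix.add_mul, pow_succ, add_assoc]
          have hb22 : R₀ * B + K ^ t * K = K ^ (t + 1) := by
            rw [hRB, zero_add, pow_succ]
          rw [pow_succ, hEq, hD, Matrix.fromBlocks_multiply, hb11, hb22]
        · intro a
          rw [Matrix.add_mul, Matrix.mul_assoc P A, ← Matrix.mul_assoc A, ← pow_succ',
            Matrix.mul_assoc Q C, hCAB a, Matrix.mul_zero, i3 (a + 1), add_zero]
        · intro a
          rw [Matrix.add_mul, Matrix.mul_assoc R₀ A, ← Matrix.mul_assoc A, ← pow_succ',
            Matrix.mul_assoc (K ^ t) C, hCAB a, Matrix.mul_zero, i5 (a + 1), add_zero]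
        · intro m b hmb
          have e1 : ((A ^ t + P) * B + Q * K) * K ^ b
              = A ^ t * (B * K ^ b) + Q * K ^ (b + 1) := by
            rw [Matrix.add_mul, Matrix.add_mul, hPB, add_zero, Matrix.mul_assoc,
              Matrix.mul_assoc Q K, ← pow_succ']
          rw [e1, Matrix.mul_add, ← Matrix.mul_assoc (A ^ m) (A ^ t), ← pow_add]
          have e2 : A ^ (m + t) * (B * K ^ b) = 0 := by
            rcases le_or_gt r (m + t) with hmt | hmt
            · rw [pow_eq_zero_of_le hmt hAr, Matrix.zero_mul]
            · rw [pow_eq_zero_of_le (by omega : s ≤ b) hKsp, Matrix.mul_zero, Matrix.mul_zero]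
          rw [e2, zero_add, iQ m (b + 1) (by omega)]
        · intro m₁ m₂ hm
          rcases Nat.eq_zero_or_pos r with hr | hr
          · ext i j; exact absurd i.isLt (by omega)
          rw [Matrix.add_mul, Matrix.mul_add]
          have e1 : A ^ m₁ * (P * A * A ^ m₂) = 0 := by
            rw [Matrix.mul_assoc P A, ← pow_succ']
            exact iP m₁ (m₂ + 1) (by omega)
          have e2 : A ^ m₁ * (Q * C * A ^ m₂) = 0 := by
            rcases Nat.eq_zero_or_pos m₂ with rfl | hm2
            · have hQ0 : A ^ m₁ * Q = 0 := by
                have := iQ m₁ 0 (by omega)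
                rwa [pow_zero, Matrix.mul_one] at this
              rw [pow_zero, Matrix.mul_one, ← Matrix.mul_assoc, hQ0, Matrix.zero_mul]
            · rw [Matrix.mul_assoc Q C, hCApow m₂ hm2, Matrix.mul_zero, Matrix.mul_zero]
          rw [e1, e2, add_zero]
        · intro b m hbm
          rw [Matrix.add_mul, Matrix.mul_add]
          have e1 : K ^ b * (R₀ * A * A ^ m) = 0 := by
            rw [Matrix.mul_assoc R₀ A, ← pow_succ']
            exact iR b (m + 1) (by omega)
          have e2 : K ^ b * (K ^ t * C * A ^ m) = 0 := by
            rcases Nat.eq_zero_or_pos m with rfl | hm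
            · rcases Nat.eq_zero_or_pos r with hr | hr
              · have hC0 : C = 0 := by
                  ext i j; exact absurd j.isLt (by omega)
                rw [hC0, Matrix.mul_zero, Matrix.zero_mul, Matrix.mul_zero]
              · rw [← Matrix.mul_assoc (K ^ b), ← Matrix.mul_assoc (K ^ b), ← pow_add,
                  pow_eq_zero_of_le (by omega : s ≤ b + t) hKsp, Matrix.zero_mul,
                  Matrix.zero_mul]
            · rw [Matrix.mul_assoc (K ^ t) C, hCApow m hm, Matrix.mul_zero, Matrix.mul_zero]
          rw [e1, e2, add_zero]
    obtain ⟨P, Q, R₀, hEq, _, _, iQ, iP, iR⟩ := main2 (2 * r + s + 1) (by omega)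
    refine ⟨2 * r + s + 1, ?_⟩
    have hQ : Q = 0 := by
      have := iQ 0 0 (by omega)
      rwa [pow_zero, pow_zero, Matrix.one_mul, Matrix.mul_one] at this
    have hP : P = 0 := by
      have := iP 0 0 (by omega)
      rwa [pow_zero, Matrix.one_mul, Matrix.mul_one] at this
    have hR : R₀ = 0 := by
      have := iR 0 0 (by omega)
      rwa [pow_zero, pow_zero, Matrix.one_mul, Matrix.mul_one] at this
    rw [hEq, hQ, hP, hR, pow_eq_zero_of_le (by omega : r ≤ 2 * r + s + 1) hAr,
      pow_eq_zero_of_le (by omega : s ≤ 2 * r + s + 1) hKsp, add_zero]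
    simp
end
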